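/- Let f : V × V × (0,∞) → ℝ satisfy: for every t0 > 0 there is C with |f(x,y;t)| ≤ C * t^k for 0 < t < t0 and all x,y, and the L^1(θ)-norm of f(x,·;t) is bounded by B on (0,t0). Then the series Σ_{ℓ=1}^∞ |f^{*ℓ}(x,y;t)| converges and is bounded by C * B * t^k * exp(t * B) / B, in particular Σ_{ℓ=1}^∞ |f^{*ℓ}(x,y;t)| = O(t^k) as t → 0, uniformly in x, y ∈ V. -/

import Mathlib

/-!
Convolving with `f` costs at most the factor `B` (the `L¹(θ)` bound of `f(x,·;s)`) times a time
integral, so by induction `|f^{*(n+1)}(x,y;t)| ≤ C tᵏ (B t)ⁿ / n!`; summing these bounds gives the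
exponential series `C tᵏ e^{B t}`.
-/

open MeasureTheory

/-- Time–space convolution of two kernels on a weighted countable vertex set. -/
noncomputable def conv {V : Type*} (θ : V → ℝ) (F G : V → V → ℝ → ℝ) :
    V → V → ℝ → ℝ :=
  fun x y t => ∫ r in (0:ℝ)..t, ∑' z, F x z (t - r) * G z y r * θ z

/-- `iterConv θ f n` is the `(n+1)`-fold convolution `f^{*(n+1)}`. -/
noncomputable def iterConv {V : Type*} (θ : V → ℝ) (f : V → V → ℝ → ℝ) :
    ℕ → (V → V → ℝ → ℝ)
  | 0 => f
  | n + 1 => conv θ f (iterConv θ f n)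

open Set Nat

lemma abs_tsum_mul_mul_le {ι : Type*} {a b w : ι → ℝ} {M : ℝ} (hw : ∀ i, 0 ≤ w i)
    (ha : Summable fun i => |a i| * w i) (hb : ∀ i, |b i| ≤ M) :
    |∑' i, a i * b i * w i| ≤ M * ∑' i, |a i| * w i := by
  rw [← Real.norm_eq_abs]
  refine tsum_of_norm_bounded (ha.hasSum.mul_left M) fun i => ?_
  rw [Real.norm_eq_abs, abs_mul, abs_mul, abs_of_nonneg (hw i)]
  calc |a i| * |b i| * w i ≤ |a i| * M * w i :=
        mul_le_mul_of_nonneg_right (mul_le_mul_of_nonneg_left (hb i) (abs_nonneg _)) (hw i)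
    _ = M * (|a i| * w i) := by ring

lemma abs_conv_le {V : Type*} {θ : V → ℝ} (hθ : ∀ z, 0 ≤ θ z) {F G : V → V → ℝ → ℝ}
    {x y : V} {t B : ℝ} (ht : 0 ≤ t) {g : ℝ → ℝ} (hg : IntervalIntegrable g volume 0 t)
    (hF : ∀ s ∈ Ioo 0 t, Summable (fun z => |F x z s| * θ z) ∧ ∑' z, |F x z s| * θ z ≤ B)
    (hG : ∀ r ∈ Ioo 0 t, ∀ z, |G z y r| ≤ g r) :
    |conv θ F G x y t| ≤ B * ∫ r in (0:ℝ)..t, g r := by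
  have hpointwise : ∀ r ∈ Ioo 0 t,
      |∑' z, F x z (t - r) * G z y r * θ z| ≤ B * g r := by
    intro r hr
    have hs : t - r ∈ Ioo 0 t := ⟨by linarith [hr.2], by linarith [hr.1]⟩
    have hg0 : 0 ≤ g r := (abs_nonneg _).trans (hG r hr x)
    calc |∑' z, F x z (t - r) * G z y r * θ z|
        ≤ g r * ∑' z, |F x z (t - r)| * θ z := abs_tsum_mul_mul_le hθ (hF _ hs).1 (hG r hr)
      _ ≤ g r * B := mul_le_mul_of_nonneg_left (hF _ hs).2 hg0
      _ = B * g r := mul_comm _ _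
  rw [← intervalIntegral.integral_const_mul, ← Real.norm_eq_abs]
  refine intervalIntegral.norm_integral_le_of_norm_le ht ?_ (hg.const_mul B)
  filter_upwards [volume.ae_ne t] with r hrt hr
  exact hpointwise r ⟨hr.1, lt_of_le_of_ne hr.2 hrt⟩

lemma integral_mul_pow_eq_div_factorial (c B t : ℝ) (n : ℕ) :
    B * ∫ r in (0:ℝ)..t, c * B ^ n / n ! * r ^ n = c * (B * t) ^ (n + 1) / (n + 1)! := by
  rw [intervalIntegral.integral_const_mul, integral_pow, factorial_succ]
  push_cast
  field_simp
  ring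

lemma abs_iterConv_le {V : Type*} {θ : V → ℝ} (hθ : ∀ z, 0 ≤ θ z) {f : V → V → ℝ → ℝ}
    {t0 C B : ℝ} {k : ℕ} (hC : 0 ≤ C) (hB : 0 ≤ B)
    (hf : ∀ (x y : V) (t : ℝ), 0 < t → t < t0 → |f x y t| ≤ C * t ^ k)
    (hfL1 : ∀ (x : V) (t : ℝ), 0 < t → t < t0 →
      Summable (fun z => |f x z t| * θ z) ∧ (∑' z, |f x z t| * θ z) ≤ B)
    (n : ℕ) (x y : V) {t : ℝ} (ht : 0 < t) (htt0 : t < t0) :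
    |iterConv θ f n x y t| ≤ C * t ^ k * (B * t) ^ n / n ! := by
  induction n generalizing x y t with
  | zero => simpa [iterConv] using hf x y t ht htt0
  | succ n ih =>
    -- `rᵏ ≤ tᵏ` on `(0, t)` leaves a pure power of `r` to integrate
    have hG : ∀ r ∈ Ioo 0 t, ∀ z,
        |iterConv θ f n z y r| ≤ C * t ^ k * B ^ n / n ! * r ^ n := by
      intro r hr z
      have hrk : r ^ k ≤ t ^ k := pow_le_pow_left₀ hr.1.le hr.2.le k
      calc |iterConv θ f n z y r| ≤ C * r ^ k * (B * r) ^ n / n ! :=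
            ih z y hr.1 (hr.2.trans htt0)
        _ ≤ C * t ^ k * (B * r) ^ n / n ! := by
            gcongr
            exact pow_nonneg (mul_nonneg hB hr.1.le) n
        _ = C * t ^ k * B ^ n / n ! * r ^ n := by ring
    calc |iterConv θ f (n + 1) x y t|
        ≤ B * ∫ r in (0:ℝ)..t, C * t ^ k * B ^ n / n ! * r ^ n :=
          abs_conv_le hθ ht.le
            ((continuous_const.mul (continuous_pow n)).intervalIntegrable _ _)
            (fun s hs => hfL1 x s hs.1 (hs.2.trans htt0)) hG
      _ = C * t ^ k * (B * t) ^ (n + 1) / (n + 1)! := integral_mul_pow_eq_div_factorial _ _ _ _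

lemma summable_abs_and_tsum_le_mul_exp {a : ℕ → ℝ} {c x : ℝ}
    (ha : ∀ n, |a n| ≤ c * x ^ n / n !) :
    Summable (fun n => |a n|) ∧ ∑' n, |a n| ≤ c * Real.exp x := by
  have hexp : HasSum (fun n => c * (x ^ n / n !)) (c * Real.exp x) := by
    rw [Real.exp_eq_exp_ℝ]
    exact (NormedSpace.expSeries_div_hasSum_exp x).mul_left c
  have ha' : ∀ n, |a n| ≤ c * (x ^ n / n !) := fun n => (ha n).trans_eq (mul_div_assoc _ _ _)
  have hsum : Summable (fun n => |a n|) :=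
    .of_nonneg_of_le (fun n => abs_nonneg _) ha' hexp.summable
  exact ⟨hsum, hasSum_le ha' hsum.hasSum hexp⟩

theorem convolution_series_bound_general {V : Type*}
    (θ : V → ℝ) (hθ : ∀ x, 0 < θ x)
    (f : V → V → ℝ → ℝ) (t0 C B : ℝ) (hC : 0 < C) (hB : 0 < B) (k : ℕ)
    (hf : ∀ (x y : V) (t : ℝ), 0 < t → t < t0 → |f x y t| ≤ C * t ^ k)
    (hfL1 : ∀ (x : V) (t : ℝ), 0 < t → t < t0 →
      Summable (fun z => |f x z t| * θ z) ∧ (∑' z, |f x z t| * θ z) ≤ B) :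
    ∀ (x y : V) (t : ℝ), 0 < t → t < t0 →
      Summable (fun ℓ : ℕ => |iterConv θ f ℓ x y t|) ∧
      (∑' ℓ : ℕ, |iterConv θ f ℓ x y t|) ≤ C * B * t ^ k * Real.exp (t * B) / B := by
  intro x y t ht htt0
  have hbound : ∀ n, |iterConv θ f n x y t| ≤ C * t ^ k * (B * t) ^ n / n ! := fun n =>
    abs_iterConv_le (fun z => (hθ z).le) hC.le hB.le hf hfL1 n x y ht htt0
  have hrhs : C * B * t ^ k * Real.exp (t * B) / B = C * t ^ k * Real.exp (B * t) := by
    rw [mul_comm t B]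
    field_simp
  rw [hrhs]
  exact summable_abs_and_tsum_le_mul_exp hbound

/-- The series `Σ_{ℓ≥1} |f^{*ℓ}(x,y;t)|` converges and is `O(t^k)` as `t → 0`,
being bounded by `C B t^k exp(tB)/B`, uniformly in `x, y`. -/
theorem convolution_series_bound {V : Type*} [Countable V]
    (θ : V → ℝ) (hθ : ∀ x, 0 < θ x)
    (f : V → V → ℝ → ℝ) (t0 C B : ℝ) (ht0 : 0 < t0) (hC : 0 < C) (hB : 0 < B) (k : ℕ)
    (hf : ∀ (x y : V) (t : ℝ), 0 < t → t < t0 → |f x y t| ≤ C * t ^ k)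
    (hfL1 : ∀ (x : V) (t : ℝ), 0 < t → t < t0 →
      Summable (fun z => |f x z t| * θ z) ∧ (∑' z, |f x z t| * θ z) ≤ B) :
    ∀ (x y : V) (t : ℝ), 0 < t → t < t0 →
      Summable (fun ℓ : ℕ => |iterConv θ f ℓ x y t|) ∧
      (∑' ℓ : ℕ, |iterConv θ f ℓ x y t|) ≤ C * B * t ^ k * Real.exp (t * B) / B :=
  convolution_series_bound_general θ hθ f t0 C B hC hB k hf hfL1
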